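/- arXiv:2205.09268 — 2 statements merged into one kernel-verified Lean document; each statement's English description precedes it below -/
import Mathlib

section
/- For the Grover state |ψ_t⟩ = cos θ_t |χ₀⟩ + sin θ_t |χ₁⟩ in the N-dimensional computational basis (with |χ₀⟩, |χ₁⟩ uniform superpositions over N−M non-targets and M targets), the l₁-norm of coherence equals C_l(t) = (√M sin θ_t + √(N−M) cos θ_t)² − 1. -/
open Real Finset

/-!
For a real state vector, `|ψ i ψ j| = |ψ i| |ψ j|`, so the off-diagonal `l₁` mass of `|ψ⟩⟨ψ|`
is `(∑ |ψ i|)² - ∑ ψ i²`. The Grover state is normalized and, for `θ ∈ [0, π/2]`, has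
nonnegative amplitudes, `M` equal to `sin θ / √M` and `N - M` equal to `cos θ / √(N - M)`;
hence `∑ |ψ i| = √M sin θ + √(N - M) cos θ`.
-/

theorem sum_offDiag_abs_mul_eq {ι : Type*} [Fintype ι] [DecidableEq ι] (ψ : ι → ℝ) :
    (∑ i, ∑ j, if i ≠ j then |ψ i * ψ j| else 0) = (∑ i, |ψ i|) ^ 2 - ∑ i, ψ i ^ 2 := by
  have hrow : ∀ i, (∑ j, if i ≠ j then |ψ i * ψ j| else 0) =
      |ψ i| * ∑ j, |ψ j| - ψ i ^ 2 := by
    intro i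
    have hdiag : ∀ j, (if i ≠ j then |ψ i * ψ j| else 0) =
        |ψ i| * |ψ j| - if i = j then |ψ i| * |ψ j| else 0 := by
      intro j
      by_cases h : i = j <;> simp [h, abs_mul]
    rw [sum_congr rfl fun j _ => hdiag j, sum_sub_distrib, ← mul_sum, sum_ite_eq,
      if_pos (mem_univ i), abs_mul_abs_self, sq]
  rw [sum_congr rfl fun i _ => hrow i, sum_sub_distrib, ← sum_mul, sq]

theorem Fin.sum_ite_val_lt {α : Type*} [AddCommMonoid α] {N M : ℕ} (h : M ≤ N) (a b : α) :
    (∑ i : Fin N, if (i : ℕ) < M then a else b) = M • a + (N - M) • b := by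
  rw [sum_ite, Finset.sum_const, Finset.sum_const, Fin.card_filter_val_lt, filter_not,
    card_univ_sdiff, Fin.card_filter_val_lt, Fintype.card_fin, min_eq_right h]

theorem mul_div_sqrt (x a : ℝ) : x * (a / √x) = √x * a := by
  rw [mul_div_left_comm, div_sqrt, mul_comm]

theorem mul_div_sqrt_sq {x : ℝ} (hx : 0 < x) (a : ℝ) : x * (a / √x) ^ 2 = a ^ 2 := by
  rw [div_pow, sq_sqrt hx.le, mul_div_cancel₀ _ hx.ne']

/-- For the Grover state `ψ_t = cos θ_t χ₀ + sin θ_t χ₁` in the `N`-dimensional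
computational basis (targets the first `M` indices), the `l₁`-norm of coherence of
`ρ = |ψ_t⟩⟨ψ_t|` equals `(√M sin θ_t + √(N−M) cos θ_t)² − 1`. -/
theorem l1_coherence_grover_state
    (N M : ℕ) (hM : 1 ≤ M) (hMN : M < N)
    (θ : ℝ) (hθ : θ ∈ Set.Icc 0 (Real.pi / 2))
    (ψ : Fin N → ℝ)
    (hψ : ∀ i : Fin N, ψ i =
      if (i : ℕ) < M then Real.sin θ / Real.sqrt M
      else Real.cos θ / Real.sqrt ((N : ℝ) - M)) :
    (∑ i : Fin N, ∑ j : Fin N, if i ≠ j then |ψ i * ψ j| else 0) =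
      (Real.sqrt M * Real.sin θ + Real.sqrt ((N : ℝ) - M) * Real.cos θ) ^ 2 - 1 := by
  obtain ⟨hθ0, hθπ⟩ := hθ
  have hsin : 0 ≤ sin θ := sin_nonneg_of_nonneg_of_le_pi hθ0 (by linarith [pi_pos])
  have hcos : 0 ≤ cos θ := cos_nonneg_of_mem_Icc ⟨by linarith [pi_pos], hθπ⟩
  have hM0 : (0 : ℝ) < M := by exact_mod_cast hM
  have hNM : (0 : ℝ) < N - M := sub_pos.mpr (by exact_mod_cast hMN)
  obtain rfl : ψ = fun i : Fin N => if (i : ℕ) < M then sin θ / √M else cos θ / √((N : ℝ) - M) :=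
    funext hψ
  rw [sum_offDiag_abs_mul_eq]
  simp only [apply_ite (|·|), apply_ite (· ^ 2), Fin.sum_ite_val_lt hMN.le, nsmul_eq_mul,
    Nat.cast_sub hMN.le, abs_of_nonneg (div_nonneg hsin (sqrt_nonneg _)),
    abs_of_nonneg (div_nonneg hcos (sqrt_nonneg _)), mul_div_sqrt,
    mul_div_sqrt_sq hM0, mul_div_sqrt_sq hNM, sin_sq_add_cos_sq]
end

section
/- Fix M ≥ 1 and t, and let θ_N = 2 arcsin√(M/N), P_N = sin²((2t+1)θ_N/2). Then the normalized relative-entropy coherence 𝒩(C_e) = C_e/ln(N−M), where C_e = P_N ln(M/P_N) + (1−P_N) ln((N−M)/(1−P_N)) − S_N with 0 ≤ S_N ≤ ln 2, satisfies 𝒩(C_e) + P_N → 1 as N → ∞. -/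
/-!
Since `p log(x/p) = p log x − p log p`, the coherence splits as
`C_N = (1 − P_N) ln(N − M) + R_N`, where `R_N` is a combination of `P_N ln(M/P_N)`,
`(1 − P_N) ln(1 − P_N)` and `S_N`, each bounded because `|x ln x| ≤ 1` on `[0, 1]`.
Hence `P_N + C_N / ln(N − M) = 1 + R_N / ln(N − M) → 1`.
-/

open Real Filter Topology

namespace Real

theorem mul_log_div_eq (p : ℝ) {x : ℝ} (hx : x ≠ 0) :
    p * log (x / p) = p * log x - p * log p := by
  rcases eq_or_ne p 0 with rfl | hp
  · simp
  · rw [log_div hx hp, mul_sub]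

theorem abs_mul_log_le_one {x : ℝ} (h0 : 0 ≤ x) (h1 : x ≤ 1) : |x * log x| ≤ 1 := by
  rcases h0.eq_or_lt with rfl | hpos
  · simp
  · rw [mul_comm]
    exact (abs_log_mul_self_lt x hpos h1).le

theorem abs_mul_log_div_le (m : ℝ) {p : ℝ} (h0 : 0 ≤ p) (h1 : p ≤ 1) :
    |p * log (m / p)| ≤ |log m| + 1 := by
  rcases eq_or_ne m 0 with rfl | hm
  · simp
  · rw [mul_log_div_eq p hm]
    have hpm : |p * log m| ≤ |log m| := by
      rw [abs_mul, abs_of_nonneg h0]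
      exact mul_le_of_le_one_left (abs_nonneg _) h1
    calc |p * log m - p * log p| ≤ |p * log m| + |p * log p| := abs_sub _ _
      _ ≤ |log m| + 1 := add_le_add hpm (abs_mul_log_le_one h0 h1)

end Real

theorem mul_log_div_add_mul_log_div_sub_eq (m p s : ℝ) {n : ℝ} (hn : n ≠ 0) :
    p * log (m / p) + (1 - p) * log (n / (1 - p)) - s
      = (1 - p) * log n + (p * log (m / p) - (1 - p) * log (1 - p) - s) := by
  rw [mul_log_div_eq (1 - p) hn]
  ring

theorem abs_mul_log_div_sub_mul_log_sub_le (m : ℝ) {p s b : ℝ} (h0 : 0 ≤ p) (h1 : p ≤ 1)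
    (hs : |s| ≤ b) :
    |p * log (m / p) - (1 - p) * log (1 - p) - s| ≤ |log m| + 2 + b := by
  have hq : |(1 - p) * log (1 - p)| ≤ 1 := abs_mul_log_le_one (by linarith) (by linarith)
  calc |p * log (m / p) - (1 - p) * log (1 - p) - s|
      ≤ |p * log (m / p)| + |(1 - p) * log (1 - p)| + |s| := by
        linarith [abs_sub (p * log (m / p) - (1 - p) * log (1 - p)) s,
          abs_sub (p * log (m / p)) ((1 - p) * log (1 - p))]
    _ ≤ |log m| + 2 + b := by linarith [abs_mul_log_div_le m h0 h1]

theorem tendsto_add_div_of_eventuallyEq_one_sub_mul_add {α : Type*} {l : Filter α}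
    {p L R C : α → ℝ} (hL : Tendsto L l atTop)
    (hR : IsBoundedUnder (· ≤ ·) l fun a => ‖R a‖)
    (hC : ∀ᶠ a in l, C a = (1 - p a) * L a + R a) :
    Tendsto (fun a => p a + C a / L a) l (𝓝 1) := by
  have hRL : Tendsto (fun a => (L a)⁻¹ * R a) l (𝓝 0) :=
    (tendsto_inv_atTop_zero.comp hL).zero_mul_isBoundedUnder_le hR
  have hone : Tendsto (fun a => 1 + (L a)⁻¹ * R a) l (𝓝 1) := by
    simpa using tendsto_const_nhds.add hRL
  refine hone.congr' ?_
  filter_upwards [hC, hL.eventually_ne_atTop 0] with a hCa hLa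
  rw [hCa]
  field_simp
  ring

theorem normalized_relative_entropy_coherence_complementarity_general
    (M : ℕ) (t : ℕ)
    (S : ℕ → ℝ) (hS : ∀ N : ℕ, S N ∈ Set.Icc 0 (Real.log 2))
    (θ P C : ℕ → ℝ)
    (hP : ∀ N : ℕ, P N = Real.sin ((2 * t + 1) * θ N / 2) ^ 2)
    (hC : ∀ N : ℕ, C N = P N * Real.log ((M : ℝ) / P N)
        + (1 - P N) * Real.log (((N : ℝ) - M) / (1 - P N)) - S N) :
    Tendsto (fun N : ℕ => P N + C N / Real.log ((N : ℝ) - M)) atTop (nhds 1) := by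
  have hN : Tendsto (fun N : ℕ => (N : ℝ) - M) atTop atTop :=
    tendsto_atTop_add_const_right _ _ tendsto_natCast_atTop_atTop
  refine tendsto_add_div_of_eventuallyEq_one_sub_mul_add (p := P)
    (R := fun N => P N * log (M / P N) - (1 - P N) * log (1 - P N) - S N)
    (tendsto_log_atTop.comp hN) (isBoundedUnder_of ⟨|log M| + 2 + log 2, fun N => ?_⟩) ?_
  · have hP0 : 0 ≤ P N := hP N ▸ sq_nonneg _
    have hP1 : P N ≤ 1 := hP N ▸ sin_sq_le_one _
    have hSN : |S N| ≤ log 2 := (abs_of_nonneg (hS N).1).trans_le (hS N).2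
    exact abs_mul_log_div_sub_mul_log_sub_le (M : ℝ) hP0 hP1 hSN
  · filter_upwards [hN.eventually_ne_atTop 0] with N hNM
    rw [hC, mul_log_div_add_mul_log_div_sub_eq _ _ _ hNM]

/-- Fix `M ≥ 1` and `t`. With `θ_N = 2 arcsin √(M/N)`,
`P_N = sin²((2t+1)θ_N/2)`, and relative-entropy coherence
`C_N = P_N ln(M/P_N) + (1−P_N) ln((N−M)/(1−P_N)) − S_N` where `0 ≤ S_N ≤ ln 2`,
the normalized coherence `C_N / ln(N−M)` satisfies `P_N + C_N/ln(N−M) → 1` as `N → ∞`. -/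
theorem normalized_relative_entropy_coherence_complementarity
    (M : ℕ) (hM : 1 ≤ M) (t : ℕ)
    (S : ℕ → ℝ) (hS : ∀ N : ℕ, S N ∈ Set.Icc 0 (Real.log 2))
    (θ P C : ℕ → ℝ)
    (hθ : ∀ N : ℕ, θ N = 2 * Real.arcsin (Real.sqrt ((M : ℝ) / N)))
    (hP : ∀ N : ℕ, P N = Real.sin ((2 * t + 1) * θ N / 2) ^ 2)
    (hC : ∀ N : ℕ, C N = P N * Real.log ((M : ℝ) / P N)
        + (1 - P N) * Real.log (((N : ℝ) - M) / (1 - P N)) - S N) :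
    Tendsto (fun N : ℕ => P N + C N / Real.log ((N : ℝ) - M)) atTop (nhds 1) :=
  normalized_relative_entropy_coherence_complementarity_general M t S hS θ P C hP hC
end
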